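/- On the line bundle $L$, the multiplication $[a,s,x]\cdot[b,t,y]:=[ab,st,y]$, defined when $\theta_t(y)=x$, is well-defined (independent of representatives), and satisfies $\|[a,s,x]\cdot[b,t,y]\|=\|[a,s,x]\|\,\|[b,t,y]\|$ where $\|[a,s,x]\|=\sqrt{(a^*a)(x)}$. -/

import Mathlib

/-- An inverse semigroup: a semigroup with an involution `star` such that `s (star s) s = s`,
`(star s) s (star s) = star s`, and idempotents commute (this forces `star s` to be the
unique generalized inverse of `s`). -/
class InverseSemigroup (S : Type*) extends Semigroup S, Star S where
  mul_star_mul : ∀ s : S, s * star s * s = s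
  star_mul_star : ∀ s : S, star s * s * star s = star s
  idem_comm : ∀ e f : S, e * e = e → f * f = f → e * f = f * e

/-- The natural partial order on an inverse semigroup: `s ≤ t` iff `s = t (star s) s`. -/
def ISle {S : Type*} [InverseSemigroup S] (s t : S) : Prop := t * (star s * s) = s

/-- A (concrete) Fell bundle over an inverse semigroup `S`: a family of closed subspaces
`fib s` of a C*-algebra `A`, with `fib s * fib t ⊆ fib (s t)`, `(fib s)* ⊆ fib (star s)`,
and `fib s ⊆ fib t` whenever `s ≤ t`.  (The fibers are thus Banach spaces with a
bilinear associative multiplication `𝒜ₛ × 𝒜ₜ → 𝒜ₛₜ`, a conjugate-linear involution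
`𝒜ₛ → 𝒜ₛ*`, isometric inclusions, and the C*-identities hold in `A`.) -/
structure FellBundle (S : Type*) [InverseSemigroup S] (A : Type*)
    [NormedRing A] [StarRing A] [NormedAlgebra ℂ A] where
  fib : S → Submodule ℂ A
  isClosed_fib : ∀ s, IsClosed (fib s : Set A)
  mul_mem : ∀ {s t : S} {a b : A}, a ∈ fib s → b ∈ fib t → a * b ∈ fib (s * t)
  star_mem : ∀ {s : S} {a : A}, a ∈ fib s → star a ∈ fib (star s)
  incl : ∀ {s t : S}, ISle s t → fib s ≤ fib t

variable {S : Type*} [InverseSemigroup S]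
variable {A : Type*} [NormedRing A] [StarRing A] [CStarRing A]
  [NormedAlgebra ℂ A] [StarModule ℂ A] [CompleteSpace A]

/-- A Fell bundle is semi-abelian if each fiber over an idempotent is commutative. -/
def FellBundle.SemiAbelian (𝓑 : FellBundle S A) : Prop :=
  ∀ e : S, e * e = e → ∀ a b : A, a ∈ 𝓑.fib e → b ∈ 𝓑.fib e → a * b = b * a

/-- A Fell bundle is saturated if `fib (s t)` is the closed linear span of
`fib s * fib t`. -/
def FellBundle.Saturated (𝓑 : FellBundle S A) : Prop :=
  ∀ s t : S, (𝓑.fib (s * t) : Set A) ⊆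
    closure (↑(Submodule.span ℂ {x : A | ∃ a ∈ 𝓑.fib s, ∃ b ∈ 𝓑.fib t, x = a * b}) : Set A)

/-- The "restriction to the idempotent semilattice" part of the bundle: the closed linear
span of the fibers over idempotents, a concrete model for `C*(𝓔)`. -/
def FellBundle.EPart (𝓑 : FellBundle S A) : Set A :=
  closure (↑(Submodule.span ℂ (⋃ e ∈ {e : S | e * e = e}, (𝓑.fib e : Set A))) : Set A)

/-- The open support `𝒰ₑ ⊆ X` of the ideal `𝒜ₑ = C₀(𝒰ₑ)`, expressed via the Gelfand
transform `val` of the idempotent part. -/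
def FellBundle.U (𝓑 : FellBundle S A) {X : Type*} (val : A → X → ℂ) (e : S) : Set X :=
  {x : X | ∃ b ∈ 𝓑.fib e, val b x ≠ 0}

/-- The equivalence relation of Definition 3.9 on triples `(a, s, x)`:
`(a,s,x) ∼ (a',s',x')` iff `x = x'` and there are an idempotent `e` and `b ∈ 𝒜ₑ` with
`b(x) ≠ 0`, `s e = s' e` and `a b ≡ₓ a' b`.  Its classes are the elements of the Fell
line bundle `L` over the groupoid of germs `𝒢`. -/
def germRelTrip {S : Type*} [InverseSemigroup S] {A : Type*} [NormedRing A] [StarRing A]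
    [NormedAlgebra ℂ A] (𝓑 : FellBundle S A) {X : Type*} (val : A → X → ℂ) :
    (A × S × X) → (A × S × X) → Prop :=
  fun p q => p.2.2 = q.2.2 ∧ ∃ (e : S) (b : A), e * e = e ∧ b ∈ 𝓑.fib e ∧
    val b p.2.2 ≠ 0 ∧ p.2.1 * e = q.2.1 * e ∧
    val (star (p.1 * b - q.1 * b) * (p.1 * b - q.1 * b)) p.2.2 = 0


/-!
On a fiber `𝒜ᵣ`, `⟨u, v⟩ = (u*v)(y)` is a semi-inner product, so Cauchy–Schwarz extends the
identity `(w*qw)(y) = (w*w)(y) q(θᵣ y)` to all `w ∈ 𝒜ᵣ`, including those with `(w*w)(y) = 0`;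
with `w = b`, `q = a*a` this is the norm identity. For well-definedness let `(e, c)` and `(f, d)`
witness the two equivalences and use saturation to pick `b₀ ∈ 𝒜ₜ` with `(b₀*b₀)(y) ≠ 0`. Then
`m = d b₀*cb₀` lies over the idempotent `f (t*et)`, `m(y) = d(y) (b₀*b₀)(y) c(x) ≠ 0`,
`st · f(t*et) = se · tf = s't' · f(t*et)`, and, since `bdb₀*` commutes with `c`,
`abm - a'b'm = (ac - a'c) b (db₀*b₀) + a' (bd - b'd)(b₀*cb₀)`, where both summands are null at `y`.
-/

namespace InverseSemigroup

variable {S : Type*} [InverseSemigroup S]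

theorem eq_of_isInverse {s x y : S} (hx₁ : s * x * s = s) (hx₂ : x * s * x = x)
    (hy₁ : s * y * s = s) (hy₂ : y * s * y = y) : x = y := by
  have idem_left : ∀ z, s * z * s = s → IsIdempotentElem (s * z) := fun z hz => by
    rw [IsIdempotentElem, ← mul_assoc, hz]
  have idem_right : ∀ z, s * z * s = s → IsIdempotentElem (z * s) := fun z hz => by
    rw [IsIdempotentElem, mul_assoc, ← mul_assoc s, hz]
  have hx : x = x * (s * y) :=
    calc x = x * (s * y * s) * x := by rw [hy₁, hx₂]
      _ = x * ((s * y) * (s * x)) := by simp only [mul_assoc]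
      _ = (x * s * x) * (s * y) := by
        rw [idem_comm _ _ (idem_left y hy₁) (idem_left x hx₁)]; simp only [mul_assoc]
      _ = x * (s * y) := by rw [hx₂]
  have hy : y = x * (s * y) :=
    calc y = y * (s * x * s) * y := by rw [hx₁, hy₂]
      _ = (y * s) * (x * s) * y := by simp only [mul_assoc]
      _ = x * s * (y * s * y) := by
        rw [idem_comm _ _ (idem_right y hy₁) (idem_right x hx₁)]; simp only [mul_assoc]
      _ = x * (s * y) := by rw [hy₂, mul_assoc]
  exact hx.trans hy.symm

protected theorem star_star (s : S) : star (star s) = s :=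
  eq_of_isInverse (mul_star_mul (star s)) (star_mul_star (star s)) (star_mul_star s)
    (mul_star_mul s)

theorem isIdempotentElem_star_mul_self (s : S) : IsIdempotentElem (star s * s) := by
  rw [IsIdempotentElem, ← mul_assoc, star_mul_star]

theorem isIdempotentElem_mul_star_self (s : S) : IsIdempotentElem (s * star s) := by
  rw [IsIdempotentElem, ← mul_assoc, mul_star_mul]

theorem commute_of_isIdempotentElem {e f : S} (he : IsIdempotentElem e)
    (hf : IsIdempotentElem f) : Commute e f :=
  idem_comm e f he hf

theorem isIdempotentElem_mul {e f : S} (he : IsIdempotentElem e) (hf : IsIdempotentElem f) :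
    IsIdempotentElem (e * f) :=
  IsIdempotentElem.mul_of_commute (commute_of_isIdempotentElem he hf) he hf

protected theorem star_mul (s t : S) : star (s * t) = star t * star s := by
  have hc := commute_of_isIdempotentElem (isIdempotentElem_mul_star_self t)
    (isIdempotentElem_star_mul_self s)
  refine eq_of_isInverse (mul_star_mul _) (star_mul_star _) ?_ ?_
  · calc s * t * (star t * star s) * (s * t)
        = s * ((t * star t) * (star s * s)) * t := by simp only [mul_assoc]
      _ = (s * star s * s) * (t * star t * t) := by rw [hc.eq]; simp only [mul_assoc]
      _ = s * t := by rw [mul_star_mul, mul_star_mul]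
  · calc star t * star s * (s * t) * (star t * star s)
        = star t * ((star s * s) * (t * star t)) * star s := by simp only [mul_assoc]
      _ = (star t * t * star t) * (star s * s * star s) := by
        rw [← hc.eq]; simp only [mul_assoc]
      _ = star t * star s := by rw [star_mul_star, star_mul_star]

theorem star_eq_self_of_isIdempotentElem {e : S} (he : IsIdempotentElem e) : star e = e :=
  eq_of_isInverse (mul_star_mul e) (star_mul_star e) (by rw [he.eq, he.eq]) (by rw [he.eq, he.eq])

theorem isIdempotentElem_star_mul_mul (r : S) {e : S} (he : IsIdempotentElem e) :
    IsIdempotentElem (star r * e * r) := by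
  have hc := commute_of_isIdempotentElem he (isIdempotentElem_mul_star_self r)
  calc star r * e * r * (star r * e * r) = star r * (e * (r * star r)) * e * r := by
        simp only [mul_assoc]
    _ = star r * ((r * star r) * e) * e * r := by rw [hc.eq]
    _ = (star r * r * star r) * (e * e) * r := by simp only [mul_assoc]
    _ = star r * e * r := by rw [star_mul_star, he.eq]

theorem isIdempotentElem_mul_mul_star (r : S) {e : S} (he : IsIdempotentElem e) :
    IsIdempotentElem (r * e * star r) := by
  simpa only [InverseSemigroup.star_star] using isIdempotentElem_star_mul_mul (star r) he

theorem isle_mul_of_isIdempotentElem (r : S) {e : S} (he : IsIdempotentElem e) :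
    ISle (e * r) r := by
  rw [ISle, InverseSemigroup.star_mul, star_eq_self_of_isIdempotentElem he]
  calc r * (star r * e * (e * r)) = (r * star r) * e * r := by
        simp only [mul_assoc]; rw [← mul_assoc e e, he.eq]
    _ = e * r := by
      rw [(commute_of_isIdempotentElem (isIdempotentElem_mul_star_self r) he).eq, mul_assoc,
        mul_star_mul]

theorem mul_mul_mul_conj (s t : S) {e f : S} (he : IsIdempotentElem e)
    (hf : IsIdempotentElem f) : s * t * (f * (star t * e * t)) = s * e * (t * f) := by
  calc s * t * (f * (star t * e * t)) = s * ((t * f * star t) * e) * t := by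
        simp only [mul_assoc]
    _ = s * e * (t * (f * (star t * t))) := by
      rw [(commute_of_isIdempotentElem (isIdempotentElem_mul_mul_star t hf) he).eq]
      simp only [mul_assoc]
    _ = s * e * ((t * star t * t) * f) := by
      rw [← (commute_of_isIdempotentElem (isIdempotentElem_star_mul_self t) hf).eq]
      simp only [mul_assoc]
    _ = s * e * (t * f) := by rw [mul_star_mul]

theorem mul_mul_mul_conj_of_eq {s s' t t' e f : S} (he : IsIdempotentElem e)
    (hf : IsIdempotentElem f) (hse : s * e = s' * e) (htf : t * f = t' * f) :
    s' * t' * (f * (star t * e * t)) = s * e * (t * f) := by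
  rw [mul_assoc s', ← mul_assoc t', ← htf, mul_assoc t, ← mul_assoc s',
    mul_mul_mul_conj s' t he hf, hse]

end InverseSemigroup

namespace FellBundle

open InverseSemigroup

variable {A : Type*} [NormedRing A] [StarRing A] [NormedAlgebra ℂ A] {X : Type*}

structure IsGelfandTransform (𝓑 : FellBundle S A) (val : A → X → ℂ) : Prop where
  map_add : ∀ {e : S} {a b : A}, IsIdempotentElem e → a ∈ 𝓑.fib e → b ∈ 𝓑.fib e →
    ∀ x, val (a + b) x = val a x + val b x
  map_smul : ∀ {e : S} {a : A} (c : ℂ), IsIdempotentElem e → a ∈ 𝓑.fib e →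
    ∀ x, val (c • a) x = c * val a x
  map_mul : ∀ {e f : S} {a b : A}, IsIdempotentElem e → IsIdempotentElem f →
    a ∈ 𝓑.fib e → b ∈ 𝓑.fib f → ∀ x, val (a * b) x = val a x * val b x
  map_star : ∀ {e : S} {a : A}, IsIdempotentElem e → a ∈ 𝓑.fib e →
    ∀ x, val (star a) x = (starRingEnd ℂ) (val a x)
  star_mul_self_nonneg : ∀ {s : S} {a : A}, a ∈ 𝓑.fib s →
    ∀ x, (val (star a * a) x).im = 0 ∧ 0 ≤ (val (star a * a) x).re

variable {𝓑 : FellBundle S A}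

theorem star_mem_of_isIdempotentElem {e : S} (he : IsIdempotentElem e) {a : A}
    (ha : a ∈ 𝓑.fib e) : star a ∈ 𝓑.fib e := by
  simpa only [star_eq_self_of_isIdempotentElem he] using 𝓑.star_mem ha

theorem star_mul_mem {r : S} {u v : A} (hu : u ∈ 𝓑.fib r) (hv : v ∈ 𝓑.fib r) :
    star u * v ∈ 𝓑.fib (star r * r) :=
  𝓑.mul_mem (𝓑.star_mem hu) hv

theorem mem_fib_of_mem_fib_mul {e r : S} (he : IsIdempotentElem e) {a : A}
    (ha : a ∈ 𝓑.fib (e * r)) : a ∈ 𝓑.fib r :=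
  𝓑.incl (isle_mul_of_isIdempotentElem r he) ha

namespace IsGelfandTransform

variable {val : A → X → ℂ} (hval : 𝓑.IsGelfandTransform val)
include hval

theorem map_sub {e : S} (he : IsIdempotentElem e) {a b : A} (ha : a ∈ 𝓑.fib e)
    (hb : b ∈ 𝓑.fib e) (x : X) : val (a - b) x = val a x - val b x := by
  rw [sub_eq_add_neg, ← neg_one_smul ℂ b, hval.map_add he ha (Submodule.smul_mem _ _ hb),
    hval.map_smul _ he hb]
  ring

theorem map_zero {e : S} (he : IsIdempotentElem e) (x : X) : val 0 x = 0 := by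
  simpa using hval.map_smul 0 he (Submodule.zero_mem _) x

theorem val_star_mul_self_mul_of_isIdempotentElem {r g : S} {u k : A} (hu : u ∈ 𝓑.fib r)
    (hg : IsIdempotentElem g) (hk : k ∈ 𝓑.fib g) (y : X) :
    val (star (u * k) * (u * k)) y = starRingEnd ℂ (val k y) * val (star u * u) y * val k y := by
  have hr := isIdempotentElem_star_mul_self r
  have hsk := star_mem_of_isIdempotentElem hg hk
  rw [show star (u * k) * (u * k) = star k * (star u * u) * k by simp only [star_mul, mul_assoc],
    hval.map_mul (isIdempotentElem_mul hg hr) hg (𝓑.mul_mem hsk (star_mul_mem hu hu)) hk,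
    hval.map_mul hg hr hsk (star_mul_mem hu hu), hval.map_star hg hk]

theorem commute_of_mem_fib
    (hinj : ∀ {e : S} {a b : A}, IsIdempotentElem e → a ∈ 𝓑.fib e → b ∈ 𝓑.fib e →
      (∀ x, val a x = val b x) → a = b)
    {e f : S} (he : IsIdempotentElem e) (hf : IsIdempotentElem f) {p q : A}
    (hp : p ∈ 𝓑.fib e) (hq : q ∈ 𝓑.fib f) : Commute p q :=
  hinj (isIdempotentElem_mul he hf) (𝓑.mul_mem hp hq)
    (by rw [(commute_of_isIdempotentElem he hf).eq]; exact 𝓑.mul_mem hq hp)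
    fun x => by rw [hval.map_mul he hf hp hq, hval.map_mul hf he hq hp, mul_comm]

section Complete

variable [CompleteSpace A]

theorem norm_val_le {e : S} (he : IsIdempotentElem e) {a : A} (ha : a ∈ 𝓑.fib e) (y : X) :
    ‖val a y‖ ≤ ‖a‖ := by
  by_contra! hlt
  have hne : val a y ≠ 0 := fun h => (norm_nonneg a).not_gt (by simpa [h] using hlt)
  set z := (val a y)⁻¹ • a
  have hz : z ∈ 𝓑.fib e := Submodule.smul_mem _ _ ha
  have hz_val : val z y = 1 := by rw [hval.map_smul _ he ha, inv_mul_cancel₀ hne]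
  have hz_norm : ‖z‖ < 1 := by
    rw [norm_smul, norm_inv, inv_mul_lt_iff₀ (norm_pos_iff.mpr hne), mul_one]
    exact hlt
  -- `c = ∑ zⁿ⁺¹` lies in the closed fiber and solves `c = z + z c`, impossible since `val z = 1`.
  set c := z * ∑' n, z ^ n
  have hc : c ∈ 𝓑.fib e := by
    have hpow : ∀ n, z * z ^ n ∈ 𝓑.fib e := fun n => by
      induction n with
      | zero => simpa using hz
      | succ n ih => rw [pow_succ, ← mul_assoc]; simpa only [he.eq] using 𝓑.mul_mem ih hz
    exact (𝓑.isClosed_fib e).mem_of_tendsto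
      ((summable_geometric_of_norm_lt_one hz_norm).hasSum.mul_left z).tendsto_sum_nat
      (.of_forall fun n => Submodule.sum_mem _ fun i _ => hpow i)
  have hc_eq : c = z + z * c := by
    have hgeom := mul_neg_geom_series z hz_norm
    rw [sub_mul, one_mul, sub_eq_iff_eq_add] at hgeom
    show z * ∑' n, z ^ n = z + z * (z * ∑' n, z ^ n)
    conv_lhs => rw [hgeom]
    rw [mul_add, mul_one]
  have hzc : z * c ∈ 𝓑.fib e := by simpa only [he.eq] using 𝓑.mul_mem hz hc
  have key : val c y = 1 + val c y := by
    conv_lhs => rw [hc_eq]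
    rw [hval.map_add he hz hzc, hval.map_mul he he hz hc, hz_val, one_mul]
  simp at key

theorem val_eq_zero_of_mem_closure_span {e : S} (he : IsIdempotentElem e) {T : Set A}
    (hT : T ⊆ 𝓑.fib e) {y : X} (hT₀ : ∀ v ∈ T, val v y = 0) {w : A} (hw : w ∈ 𝓑.fib e)
    (hcl : w ∈ closure (Submodule.span ℂ T : Set A)) : val w y = 0 := by
  have hspan : Submodule.span ℂ T ≤ 𝓑.fib e := Submodule.span_le.mpr hT
  have hspan₀ : ∀ v ∈ Submodule.span ℂ T, val v y = 0 := by
    intro v hv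
    induction hv using Submodule.span_induction with
    | mem v hv => exact hT₀ v hv
    | zero => exact hval.map_zero he y
    | add u v hu hv hu₀ hv₀ => rw [hval.map_add he (hspan hu) (hspan hv), hu₀, hv₀, add_zero]
    | smul c v hv hv₀ => rw [hval.map_smul c he (hspan hv), hv₀, mul_zero]
  by_contra hne
  obtain ⟨v, hv, hdist⟩ := Metric.mem_closure_iff.mp hcl _ (norm_pos_iff.mpr hne)
  have hle := hval.norm_val_le he (Submodule.sub_mem _ hw (hspan hv)) y
  rw [hval.map_sub he hw (hspan hv), hspan₀ v hv, sub_zero, ← dist_eq_norm] at hle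
  exact (hle.trans_lt hdist).false

end Complete

variable [StarModule ℂ A]

@[reducible]
def fiberInnerCore (r : S) (y : X) : PreInnerProductSpace.Core ℂ (𝓑.fib r) where
  inner u v := val (star (u : A) * v) y
  conj_inner_symm u v := by
    rw [← hval.map_star (isIdempotentElem_star_mul_self r) (star_mul_mem v.2 u.2), star_mul,
      star_star]
  re_inner_nonneg u := (hval.star_mul_self_nonneg u.2 y).2
  add_left u v w := by
    simp only [Submodule.coe_add, star_add, add_mul]
    exact hval.map_add (isIdempotentElem_star_mul_self r) (star_mul_mem u.2 w.2)
      (star_mul_mem v.2 w.2) y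
  smul_left u v c := by
    simp only [Submodule.coe_smul, star_smul, smul_mul_assoc]
    exact hval.map_smul _ (isIdempotentElem_star_mul_self r) (star_mul_mem u.2 v.2) y

theorem val_star_mul_eq_zero {r : S} {u v : A} (hu : u ∈ 𝓑.fib r) (hv : v ∈ 𝓑.fib r) {y : X}
    (h : val (star u * u) y = 0) : val (star u * v) y = 0 := by
  let := hval.fiberInnerCore r y
  have cs := InnerProductSpace.Core.inner_mul_inner_self_le (𝕜 := ℂ) (⟨u, hu⟩ : 𝓑.fib r) ⟨v, hv⟩
  rw [InnerProductSpace.Core.norm_inner_symm (⟨v, hv⟩ : 𝓑.fib r)] at cs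
  change ‖val (star u * v) y‖ * ‖val (star u * v) y‖
    ≤ (val (star u * u) y).re * (val (star v * v) y).re at cs
  rw [h, Complex.zero_re, zero_mul] at cs
  exact norm_eq_zero.mp (mul_self_eq_zero.mp (le_antisymm cs (mul_self_nonneg _)))

theorem val_star_add_mul_add_eq_zero {r : S} {u v : A} (hu : u ∈ 𝓑.fib r) (hv : v ∈ 𝓑.fib r)
    {y : X} (hu₀ : val (star u * u) y = 0) (hv₀ : val (star v * v) y = 0) :
    val (star (u + v) * (u + v)) y = 0 := by
  let := hval.fiberInnerCore r y
  have expand := InnerProductSpace.Core.inner_add_add_self (𝕜 := ℂ) (⟨u, hu⟩ : 𝓑.fib r) ⟨v, hv⟩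
  change val (star (u + v) * (u + v)) y = val (star u * u) y + val (star u * v) y
    + val (star v * u) y + val (star v * v) y at expand
  rw [expand, hu₀, hv₀, hval.val_star_mul_eq_zero hu hv hu₀, hval.val_star_mul_eq_zero hv hu hv₀]
  ring

theorem exists_mem_fib_val_star_mul_self_ne_zero [CompleteSpace A] (hsat : 𝓑.Saturated)
    {t : S} {y : X} (hy : y ∈ 𝓑.U val (star t * t)) : ∃ b ∈ 𝓑.fib t, val (star b * b) y ≠ 0 := by
  by_contra! h
  obtain ⟨w, hw, hwy⟩ := hy
  refine hwy (hval.val_eq_zero_of_mem_closure_span (isIdempotentElem_star_mul_self t) ?_ ?_ hw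
    (hsat (star t) t hw))
  · rintro _ ⟨p, hp, q, hq, rfl⟩
    exact 𝓑.mul_mem hp hq
  · rintro _ ⟨p, hp, q, hq, rfl⟩
    have hp' : star p ∈ 𝓑.fib t := by
      simpa only [InverseSemigroup.star_star] using 𝓑.star_mem hp
    simpa only [star_star] using hval.val_star_mul_eq_zero hp' hq (h _ hp')

section Action

variable {θ : S → X → X}
  (hθ : ∀ {s : S} {a : A}, a ∈ 𝓑.fib s → ∀ x : X, 0 < (val (star a * a) x).re →
    ∀ {e : S} {b : A}, IsIdempotentElem e → b ∈ 𝓑.fib e →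
      val (star a * b * a) x = val (star a * a) x * val b (θ s x))
include hθ

theorem val_star_mul_mul {r g : S} {w q : A} (hw : w ∈ 𝓑.fib r) (hg : IsIdempotentElem g)
    (hq : q ∈ 𝓑.fib g) (y : X) : val (star w * q * w) y = val (star w * w) y * val q (θ r y) := by
  obtain ⟨him, hre⟩ := hval.star_mul_self_nonneg hw y
  rcases hre.lt_or_eq with hpos | hzero
  · exact hθ hw y hpos hg hq
  · have h₀ : val (star w * w) y = 0 := Complex.ext hzero.symm him
    rw [h₀, zero_mul, mul_assoc]
    exact hval.val_star_mul_eq_zero hw (mem_fib_of_mem_fib_mul hg (𝓑.mul_mem hq hw)) h₀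

theorem val_star_mul_self_mul {s t : S} {a b : A} (ha : a ∈ 𝓑.fib s) (hb : b ∈ 𝓑.fib t)
    (y : X) : val (star (a * b) * (a * b)) y = val (star b * b) y * val (star a * a) (θ t y) := by
  rw [show star (a * b) * (a * b) = star b * (star a * a) * b by simp only [star_mul, mul_assoc]]
  exact hval.val_star_mul_mul hθ hb (isIdempotentElem_star_mul_self s) (star_mul_mem ha ha) y

theorem val_star_sub_mul_sub_eq_zero_left
    (hinj : ∀ {e : S} {a b : A}, IsIdempotentElem e → a ∈ 𝓑.fib e → b ∈ 𝓑.fib e →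
      (∀ x, val a x = val b x) → a = b)
    {s s' e t f : S} {a a' c b d b₀ : A} (ha : a ∈ 𝓑.fib s) (ha' : a' ∈ 𝓑.fib s')
    (he : IsIdempotentElem e) (hc : c ∈ 𝓑.fib e) (hse : s * e = s' * e) (hb : b ∈ 𝓑.fib t)
    (hf : IsIdempotentElem f) (hd : d ∈ 𝓑.fib f) (hb₀ : b₀ ∈ 𝓑.fib t) {y : X}
    (hP : val (star (a * c - a' * c) * (a * c - a' * c)) (θ t y) = 0) :
    val (star (a * b * (d * (star b₀ * c * b₀)) - a' * b * (d * (star b₀ * c * b₀))) *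
      (a * b * (d * (star b₀ * c * b₀)) - a' * b * (d * (star b₀ * c * b₀)))) y = 0 := by
  have hcomm : Commute (b * d * star b₀) c := hval.commute_of_mem_fib hinj
    (isIdempotentElem_mul_mul_star t hf) he (𝓑.mul_mem (𝓑.mul_mem hb hd) (𝓑.star_mem hb₀)) hc
  have hbm : b * (d * (star b₀ * c * b₀)) = c * b * (d * (star b₀ * b₀)) :=
    calc b * (d * (star b₀ * c * b₀)) = (b * d * star b₀) * c * b₀ := by simp only [mul_assoc]
      _ = c * b * (d * (star b₀ * b₀)) := by rw [hcomm.eq]; simp only [mul_assoc]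
  have hac : a * c - a' * c ∈ 𝓑.fib (s * e) :=
    Submodule.sub_mem _ (𝓑.mul_mem ha hc) (hse ▸ 𝓑.mul_mem ha' hc)
  rw [show a * b * (d * (star b₀ * c * b₀)) - a' * b * (d * (star b₀ * c * b₀))
      = (a * c - a' * c) * b * (d * (star b₀ * b₀)) by
      rw [mul_assoc a, mul_assoc a', hbm]; simp only [sub_mul, mul_assoc],
    hval.val_star_mul_self_mul_of_isIdempotentElem (𝓑.mul_mem hac hb)
      (isIdempotentElem_mul hf (isIdempotentElem_star_mul_self t))
      (𝓑.mul_mem hd (star_mul_mem hb₀ hb₀)),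
    hval.val_star_mul_self_mul hθ hac hb, hP, mul_zero, mul_zero, zero_mul]

theorem val_star_sub_mul_sub_eq_zero_right {s' t t' f g : S} {a' b b' d h : A}
    (ha' : a' ∈ 𝓑.fib s') (hb : b ∈ 𝓑.fib t) (hb' : b' ∈ 𝓑.fib t') (hd : d ∈ 𝓑.fib f)
    (htf : t * f = t' * f) {y : X} (hQ : val (star (b * d - b' * d) * (b * d - b' * d)) y = 0)
    (hg : IsIdempotentElem g) (hh : h ∈ 𝓑.fib g) :
    val (star (a' * b * (d * h) - a' * b' * (d * h)) * (a' * b * (d * h) - a' * b' * (d * h))) y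
      = 0 := by
  have hbd : b * d - b' * d ∈ 𝓑.fib (t * f) :=
    Submodule.sub_mem _ (𝓑.mul_mem hb hd) (htf ▸ 𝓑.mul_mem hb' hd)
  rw [show a' * b * (d * h) - a' * b' * (d * h) = a' * ((b * d - b' * d) * h) by
      simp only [mul_sub, sub_mul, mul_assoc],
    hval.val_star_mul_self_mul hθ ha' (𝓑.mul_mem hbd hh),
    hval.val_star_mul_self_mul_of_isIdempotentElem hbd hg hh, hQ, mul_zero, zero_mul, zero_mul]

end Action

end IsGelfandTransform
end FellBundle

open InverseSemigroup in
theorem germRelTrip_mul {A : Type*} [NormedRing A] [StarRing A] [NormedAlgebra ℂ A]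
    [StarModule ℂ A] [CompleteSpace A] {𝓑 : FellBundle S A} {X : Type*} {val : A → X → ℂ}
    (hval : 𝓑.IsGelfandTransform val)
    (hinj : ∀ {e : S} {a b : A}, IsIdempotentElem e → a ∈ 𝓑.fib e → b ∈ 𝓑.fib e →
      (∀ x, val a x = val b x) → a = b)
    {θ : S → X → X}
    (hθ : ∀ {s : S} {a : A}, a ∈ 𝓑.fib s → ∀ x : X, 0 < (val (star a * a) x).re →
      ∀ {e : S} {b : A}, IsIdempotentElem e → b ∈ 𝓑.fib e →
        val (star a * b * a) x = val (star a * a) x * val b (θ s x))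
    (hsat : 𝓑.Saturated) {s s' t t' : S} {a a' b b' : A} {x y : X}
    (ha : a ∈ 𝓑.fib s) (ha' : a' ∈ 𝓑.fib s') (hb : b ∈ 𝓑.fib t) (hb' : b' ∈ 𝓑.fib t')
    (hy : y ∈ 𝓑.U val (star t * t)) (hmatch : θ t y = x)
    (h₁ : germRelTrip 𝓑 val (a, s, x) (a', s', x))
    (h₂ : germRelTrip 𝓑 val (b, t, y) (b', t', y)) :
    germRelTrip 𝓑 val (a * b, s * t, y) (a' * b', s' * t', y) := by
  obtain ⟨-, e, c, he, hc, hcx, hse, hP⟩ := h₁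
  obtain ⟨-, f, d, hf, hd, hdy, htf, hQ⟩ := h₂
  obtain ⟨b₀, hb₀, hb₀y⟩ := hval.exists_mem_fib_val_star_mul_self_ne_zero hsat hy
  have hte := isIdempotentElem_star_mul_mul t he
  have hh : star b₀ * c * b₀ ∈ 𝓑.fib (star t * e * t) :=
    𝓑.mul_mem (𝓑.mul_mem (𝓑.star_mem hb₀) hc) hb₀
  have hidx : s * t * (f * (star t * e * t)) = s * e * (t * f) :=
    mul_mul_mul_conj_of_eq he hf rfl rfl
  have hidx₁ : s' * t * (f * (star t * e * t)) = s * e * (t * f) :=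
    mul_mul_mul_conj_of_eq he hf hse rfl
  have hidx₂ : s' * t' * (f * (star t * e * t)) = s * e * (t * f) :=
    mul_mul_mul_conj_of_eq he hf hse htf
  refine ⟨rfl, f * (star t * e * t), d * (star b₀ * c * b₀), isIdempotentElem_mul hf hte,
    𝓑.mul_mem hd hh, ?_, hidx.trans hidx₂.symm, ?_⟩
  · rw [hval.map_mul hf hte hd hh, hval.val_star_mul_mul hθ hb₀ he hc, hmatch]
    exact mul_ne_zero hdy (mul_ne_zero hb₀y hcx)
  set m := d * (star b₀ * c * b₀)
  have hm : m ∈ 𝓑.fib (f * (star t * e * t)) := 𝓑.mul_mem hd hh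
  have habm : a * b * m ∈ 𝓑.fib (s * e * (t * f)) := hidx ▸ 𝓑.mul_mem (𝓑.mul_mem ha hb) hm
  have ha'bm : a' * b * m ∈ 𝓑.fib (s * e * (t * f)) := hidx₁ ▸ 𝓑.mul_mem (𝓑.mul_mem ha' hb) hm
  have ha'b'm : a' * b' * m ∈ 𝓑.fib (s * e * (t * f)) :=
    hidx₂ ▸ 𝓑.mul_mem (𝓑.mul_mem ha' hb') hm
  show val (star (a * b * m - a' * b' * m) * (a * b * m - a' * b' * m)) y = 0
  rw [← sub_add_sub_cancel (a * b * m) (a' * b * m) (a' * b' * m)]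
  exact hval.val_star_add_mul_add_eq_zero (Submodule.sub_mem _ habm ha'bm)
    (Submodule.sub_mem _ ha'bm ha'b'm)
    (hval.val_star_sub_mul_sub_eq_zero_left hθ hinj ha ha' he hc hse hb hf hd hb₀ (hmatch ▸ hP))
    (hval.val_star_sub_mul_sub_eq_zero_right hθ ha' hb hb' hd htf hQ hte hh)

theorem stmt_16_general (𝓑 : FellBundle S A) (hsat : 𝓑.Saturated)
    {X : Type*} (val : A → X → ℂ)
    (hval_add : ∀ {e : S} {a b : A}, e * e = e → a ∈ 𝓑.fib e → b ∈ 𝓑.fib e →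
      ∀ x, val (a + b) x = val a x + val b x)
    (hval_smul : ∀ {e : S} {a : A} (c : ℂ), e * e = e → a ∈ 𝓑.fib e →
      ∀ x, val (c • a) x = c * val a x)
    (hval_mul : ∀ {e f : S} {a b : A}, e * e = e → f * f = f → a ∈ 𝓑.fib e → b ∈ 𝓑.fib f →
      ∀ x, val (a * b) x = val a x * val b x)
    (hval_star : ∀ {e : S} {a : A}, e * e = e → a ∈ 𝓑.fib e →
      ∀ x, val (star a) x = (starRingEnd ℂ) (val a x))
    (hval_inj : ∀ {e : S} {a b : A}, e * e = e → a ∈ 𝓑.fib e → b ∈ 𝓑.fib e →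
      (∀ x, val a x = val b x) → a = b)
    (hval_pos : ∀ {s : S} {a : A}, a ∈ 𝓑.fib s →
      ∀ x, (val (star a * a) x).im = 0 ∧ 0 ≤ (val (star a * a) x).re)
    (θ : S → X → X)
    (hθ : ∀ {s : S} {a : A}, a ∈ 𝓑.fib s → ∀ x : X, 0 < (val (star a * a) x).re →
      ∀ {e : S} {b : A}, e * e = e → b ∈ 𝓑.fib e →
        val (star a * b * a) x = val (star a * a) x * val b (θ s x))
    {s s' t t' : S} {a a' b b' : A} {x y : X}
    (ha : a ∈ 𝓑.fib s) (ha' : a' ∈ 𝓑.fib s') (hb : b ∈ 𝓑.fib t) (hb' : b' ∈ 𝓑.fib t')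
    (hy : y ∈ 𝓑.U val (star t * t))
    (hmatch : θ t y = x)
    (h₁ : germRelTrip 𝓑 val (a, s, x) (a', s', x))
    (h₂ : germRelTrip 𝓑 val (b, t, y) (b', t', y)) :
    germRelTrip 𝓑 val (a * b, s * t, y) (a' * b', s' * t', y) ∧
    Real.sqrt (val (star (a * b) * (a * b)) y).re =
      Real.sqrt (val (star a * a) x).re * Real.sqrt (val (star b * b) y).re := by
  have hval : 𝓑.IsGelfandTransform val := ⟨hval_add, hval_smul, hval_mul, hval_star, hval_pos⟩
  refine ⟨germRelTrip_mul hval hval_inj hθ hsat ha ha' hb hb' hy hmatch h₁ h₂, ?_⟩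
  rw [hval.val_star_mul_self_mul hθ ha hb, hmatch, Complex.mul_re, (hval_pos ha x).1, mul_zero,
    sub_zero, Real.sqrt_mul (hval_pos hb y).2, mul_comm]

/-- On the line bundle `L`, the multiplication
`[a,s,x] · [b,t,y] := [ab, st, y]`, defined when `θₜ(y) = x`, is well-defined
(independent of the chosen representatives), and satisfies
`‖[a,s,x]·[b,t,y]‖ = ‖[a,s,x]‖ ‖[b,t,y]‖`, where `‖[a,s,x]‖ = √((a*a)(x))`. -/
theorem stmt_16 (𝓑 : FellBundle S A) (hsat : 𝓑.Saturated) (hsab : 𝓑.SemiAbelian)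
    {X : Type*} (val : A → X → ℂ)
    (hval_add : ∀ {e : S} {a b : A}, e * e = e → a ∈ 𝓑.fib e → b ∈ 𝓑.fib e →
      ∀ x, val (a + b) x = val a x + val b x)
    (hval_smul : ∀ {e : S} {a : A} (c : ℂ), e * e = e → a ∈ 𝓑.fib e →
      ∀ x, val (c • a) x = c * val a x)
    (hval_mul : ∀ {e f : S} {a b : A}, e * e = e → f * f = f → a ∈ 𝓑.fib e → b ∈ 𝓑.fib f →
      ∀ x, val (a * b) x = val a x * val b x)
    (hval_star : ∀ {e : S} {a : A}, e * e = e → a ∈ 𝓑.fib e →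
      ∀ x, val (star a) x = (starRingEnd ℂ) (val a x))
    (hval_inj : ∀ {e : S} {a b : A}, e * e = e → a ∈ 𝓑.fib e → b ∈ 𝓑.fib e →
      (∀ x, val a x = val b x) → a = b)
    (hval_sep : ∀ x y : X,
      (∀ (e : S) (b : A), e * e = e → b ∈ 𝓑.fib e → val b x = val b y) → x = y)
    (hval_pos : ∀ {s : S} {a : A}, a ∈ 𝓑.fib s →
      ∀ x, (val (star a * a) x).im = 0 ∧ 0 ≤ (val (star a * a) x).re)
    (θ : S → X → X)
    (hθ : ∀ {s : S} {a : A}, a ∈ 𝓑.fib s → ∀ x : X, 0 < (val (star a * a) x).re →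
      ∀ {e : S} {b : A}, e * e = e → b ∈ 𝓑.fib e →
        val (star a * b * a) x = val (star a * a) x * val b (θ s x))
    (hθ_val : ∀ {s : S} {a : A}, a ∈ 𝓑.fib s → ∀ x ∈ 𝓑.U val (star s * s),
      val (a * star a) (θ s x) = val (star a * a) x)
    (hθ_maps : ∀ s : S, Set.MapsTo (θ s) (𝓑.U val (star s * s)) (𝓑.U val (s * star s)))
    (hθ_comp : ∀ s t : S, ∀ x ∈ 𝓑.U val (star (s * t) * (s * t)), θ s (θ t x) = θ (s * t) x)
    {s s' t t' : S} {a a' b b' : A} {x y : X}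
    (ha : a ∈ 𝓑.fib s) (ha' : a' ∈ 𝓑.fib s') (hb : b ∈ 𝓑.fib t) (hb' : b' ∈ 𝓑.fib t')
    (hx : x ∈ 𝓑.U val (star s * s)) (hy : y ∈ 𝓑.U val (star t * t))
    (hmatch : θ t y = x)
    (h₁ : germRelTrip 𝓑 val (a, s, x) (a', s', x))
    (h₂ : germRelTrip 𝓑 val (b, t, y) (b', t', y)) :
    germRelTrip 𝓑 val (a * b, s * t, y) (a' * b', s' * t', y) ∧
    Real.sqrt (val (star (a * b) * (a * b)) y).re =
      Real.sqrt (val (star a * a) x).re * Real.sqrt (val (star b * b) y).re :=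
  stmt_16_general 𝓑 hsat val hval_add hval_smul hval_mul hval_star hval_inj hval_pos θ hθ ha ha' hb
    hb' hy hmatch h₁ h₂
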